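/- Let p be an odd prime, let q be a prime different from p whose residue class generates the unit group (ZMod p²)ˣ (i.e., q is a primitive root modulo p²), and let n ≥ 1 be an integer. Then the p-adic valuation of the order of GL(Fin n, ZMod q) is exactly v_p(|GL(n, 𝔽_q)|) = ∑_{i≥0} ⌊n/((p-1)·p^i)⌋. -/

import Mathlib

/-!
Up to a power of `q`, `|GL(n, 𝔽_q)| = ∏_{k=1}^n (q ^ k - 1)`, and `p ∣ q ^ k - 1` exactly
when `d := ord_p(q)` divides `k`. Lifting the exponent gives
`v_p(q ^ (d m) - 1) = v_p(q ^ d - 1) + v_p(m)`, so with `M = ⌊n / d⌋` the valuation is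
`M · v_p(q ^ d - 1) + v_p(M!)`. For a primitive root modulo `p²` we have `d = p - 1` and
`v_p(q ^ (p - 1) - 1) = 1`, and Legendre's formula for `v_p(M!)` gives the sum.
-/

open Finset
open scoped Nat

lemma padicValNat_finset_prod {ι : Type*} {p : ℕ} [Fact p.Prime] {s : Finset ι} {f : ι → ℕ}
    (hf : ∀ i ∈ s, f i ≠ 0) :
    padicValNat p (∏ i ∈ s, f i) = ∑ i ∈ s, padicValNat p (f i) := by
  simp only [← Nat.factorization_def _ (Fact.out : p.Prime), Nat.factorization_prod_apply hf]

lemma padicValNat_factorial_eq_sum_Icc (p n : ℕ) [Fact p.Prime] :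
    padicValNat p n ! = ∑ m ∈ Icc 1 n, padicValNat p m := by
  rw [← prod_Ico_id_eq_factorial, Ico_add_one_right_eq_Icc, padicValNat_finset_prod]
  intro m hm
  exact Nat.one_le_iff_ne_zero.mp (mem_Icc.mp hm).1

lemma div_add_padicValNat_factorial_div (p d n : ℕ) [Fact p.Prime] :
    n / d + padicValNat p (n / d)! = ∑ i ∈ range (n + 1), n / (d * p ^ i) := by
  have hlog : Nat.log p (n / d) < n + 1 :=
    Nat.lt_succ_of_le ((Nat.log_le_self p _).trans (Nat.div_le_self n d))
  rw [padicValNat_factorial hlog, sum_range_succ', sum_Ico_eq_sum_range, add_comm]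
  simp [Nat.div_div_eq_div_mul, add_comm 1]

lemma sum_range_sub_eq_sum_Icc {M : Type*} [AddCommMonoid M] (f : ℕ → M) (n : ℕ) :
    ∑ i ∈ range n, f (n - i) = ∑ k ∈ Icc 1 n, f k :=
  sum_nbij' (n - ·) (n - ·) (fun i hi => by simp at hi ⊢; omega)
    (fun k hk => by simp at hk ⊢; omega) (fun i hi => by simp at hi ⊢; omega)
    (fun k hk => by simp at hk ⊢; omega) fun _ _ => rfl

lemma sum_Icc_eq_sum_Icc_div_mul {M : Type*} [AddCommMonoid M] {d : ℕ} (hd : 0 < d)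
    {f : ℕ → M} (hf : ∀ k, ¬ d ∣ k → f k = 0) (n : ℕ) :
    ∑ k ∈ Icc 1 n, f k = ∑ m ∈ Icc 1 (n / d), f (d * m) := by
  rw [← sum_image fun a _ b _ h => Nat.eq_of_mul_eq_mul_left hd h]
  symm
  refine sum_subset (fun k hk => ?_) fun k hk hk' => hf k fun ⟨m, hm⟩ => hk' ?_
  · obtain ⟨m, hm, rfl⟩ := mem_image.mp hk
    rw [mem_Icc, Nat.le_div_iff_mul_le hd] at hm
    rw [mem_Icc]
    constructor <;> nlinarith
  · subst hm
    rw [mem_Icc, mul_comm, ← Nat.le_div_iff_mul_le hd] at hk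
    exact mem_image_of_mem _ (mem_Icc.mpr ⟨by nlinarith, hk.2⟩)

lemma padicValNat_card_GL_eq_sum (F : Type*) [Field F] [Fintype F] {p : ℕ} [Fact p.Prime]
    (hp : ¬ p ∣ Fintype.card F) (n : ℕ) :
    padicValNat p (Nat.card (GL (Fin n) F)) =
      ∑ k ∈ Icc 1 n, padicValNat p (Fintype.card F ^ k - 1) := by
  rw [Matrix.card_GL_field]
  set Q := Fintype.card F
  have hQ : 1 < Q := Fintype.one_lt_card
  have hQ0 : Q ≠ 0 := by omega
  have hfactor (i : Fin n) : Q ^ n - Q ^ (i : ℕ) = Q ^ (i : ℕ) * (Q ^ (n - i) - 1) := by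
    rw [Nat.mul_sub, mul_one, ← pow_add, Nat.add_sub_of_le i.isLt.le]
  have hpow_sub_one (i : Fin n) : Q ^ (n - i) - 1 ≠ 0 :=
    Nat.sub_ne_zero_of_lt (Nat.one_lt_pow (by omega) hQ)
  have hpow (i : ℕ) : padicValNat p (Q ^ i) = 0 :=
    padicValNat.eq_zero_of_not_dvd fun h => hp ((Fact.out : p.Prime).dvd_of_dvd_pow h)
  rw [padicValNat_finset_prod fun i _ => ?_]
  · calc ∑ i : Fin n, padicValNat p (Q ^ n - Q ^ (i : ℕ))
        = ∑ i : Fin n, padicValNat p (Q ^ (n - i) - 1) := sum_congr rfl fun i _ => by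
          rw [hfactor, padicValNat.mul (pow_ne_zero _ hQ0) (hpow_sub_one i), hpow, zero_add]
      _ = ∑ i ∈ range n, padicValNat p (Q ^ (n - i) - 1) :=
          Fin.sum_univ_eq_sum_range (fun i => padicValNat p (Q ^ (n - i) - 1)) n
      _ = _ := sum_range_sub_eq_sum_Icc (fun k => padicValNat p (Q ^ k - 1)) n
  · rw [hfactor]
    exact mul_ne_zero (pow_ne_zero _ hQ0) (hpow_sub_one i)

lemma natCast_pow_eq_one_iff_dvd {N q : ℕ} (hq : 0 < q) (k : ℕ) :
    (q : ZMod N) ^ k = 1 ↔ N ∣ q ^ k - 1 := by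
  rw [← ZMod.natCast_eq_zero_iff, Nat.cast_sub (Nat.one_le_pow _ _ hq), Nat.cast_pow,
    Nat.cast_one, sub_eq_zero]

section

variable {p q : ℕ} [hp : Fact p.Prime]

lemma orderOf_natCast_dvd_sub_one (hpq : ¬ p ∣ q) : orderOf (q : ZMod p) ∣ p - 1 :=
  ZMod.orderOf_dvd_card_sub_one (by rwa [Ne, ZMod.natCast_eq_zero_iff])

lemma orderOf_natCast_ne_zero (hpq : ¬ p ∣ q) : orderOf (q : ZMod p) ≠ 0 :=
  (Nat.pos_of_dvd_of_pos (orderOf_natCast_dvd_sub_one hpq) (Nat.sub_pos_of_lt hp.out.one_lt)).ne'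

lemma dvd_pow_orderOf_sub_one (hq : 0 < q) : p ∣ q ^ orderOf (q : ZMod p) - 1 :=
  (natCast_pow_eq_one_iff_dvd hq _).mp (pow_orderOf_eq_one _)

lemma padicValNat_pow_sub_one_eq_zero (hq : 0 < q) {k : ℕ} (hk : ¬ orderOf (q : ZMod p) ∣ k) :
    padicValNat p (q ^ k - 1) = 0 :=
  padicValNat.eq_zero_of_not_dvd fun h =>
    hk (orderOf_dvd_of_pow_eq_one ((natCast_pow_eq_one_iff_dvd hq k).mpr h))

lemma padicValNat_pow_orderOf_mul_sub_one (hodd : Odd p) (hq : 1 < q) (hpq : ¬ p ∣ q)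
    {m : ℕ} (hm : m ≠ 0) :
    padicValNat p (q ^ (orderOf (q : ZMod p) * m) - 1) =
      padicValNat p (q ^ orderOf (q : ZMod p) - 1) + padicValNat p m := by
  have h := padicValNat.pow_sub_pow hodd (y := 1)
    (Nat.one_lt_pow (orderOf_natCast_ne_zero hpq) hq)
    (dvd_pow_orderOf_sub_one (by omega)) (fun h => hpq (hp.out.dvd_of_dvd_pow h)) hm
  rwa [one_pow, ← pow_mul] at h

lemma sum_Icc_padicValNat_pow_sub_one (hodd : Odd p) (hq : 1 < q) (hpq : ¬ p ∣ q) (n : ℕ) :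
    ∑ k ∈ Icc 1 n, padicValNat p (q ^ k - 1) =
      n / orderOf (q : ZMod p) * padicValNat p (q ^ orderOf (q : ZMod p) - 1) +
        padicValNat p (n / orderOf (q : ZMod p))! := by
  set d := orderOf (q : ZMod p)
  have hd := Nat.pos_of_ne_zero (orderOf_natCast_ne_zero hpq)
  calc ∑ k ∈ Icc 1 n, padicValNat p (q ^ k - 1)
      = ∑ m ∈ Icc 1 (n / d), padicValNat p (q ^ (d * m) - 1) :=
        sum_Icc_eq_sum_Icc_div_mul hd (fun k => padicValNat_pow_sub_one_eq_zero (by omega)) n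
    _ = ∑ m ∈ Icc 1 (n / d), (padicValNat p (q ^ d - 1) + padicValNat p m) :=
        sum_congr rfl fun m hm =>
          padicValNat_pow_orderOf_mul_sub_one hodd hq hpq (by simp at hm; omega)
    _ = _ := by
        rw [sum_add_distrib, sum_const, Nat.card_Icc, add_tsub_cancel_right, smul_eq_mul,
          padicValNat_factorial_eq_sum_Icc]

lemma orderOf_natCast_eq_sub_one_of_orderOf_sq_eq_totient (hodd : Odd p) (hq : 1 < q)
    (hpq : ¬ p ∣ q) (hgen : orderOf (q : ZMod (p ^ 2)) = φ (p ^ 2)) :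
    orderOf (q : ZMod p) = p - 1 := by
  set t := orderOf (q : ZMod p)
  have ht := orderOf_natCast_ne_zero hpq
  have hsq : p ^ 2 ∣ q ^ (t * p) - 1 := by
    have hne := Nat.sub_ne_zero_of_lt (Nat.one_lt_pow (mul_ne_zero ht hp.out.ne_zero) hq)
    rw [padicValNat_dvd_iff_le hne,
      padicValNat_pow_orderOf_mul_sub_one hodd hq hpq hp.out.ne_zero, padicValNat_self]
    have := one_le_padicValNat_of_dvd (Nat.sub_ne_zero_of_lt (Nat.one_lt_pow ht hq))
      (dvd_pow_orderOf_sub_one (p := p) (by omega))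
    omega
  rw [Nat.totient_prime_pow_succ hp.out, pow_one] at hgen
  have : p * (p - 1) ∣ p * t := by
    rw [← hgen, mul_comm p]
    exact orderOf_dvd_of_pow_eq_one ((natCast_pow_eq_one_iff_dvd (by omega) _).mpr hsq)
  exact Nat.dvd_antisymm (orderOf_natCast_dvd_sub_one hpq)
    (Nat.dvd_of_mul_dvd_mul_left hp.out.pos this)

lemma padicValNat_pow_sub_one_sub_one_of_orderOf_sq_eq_totient (hq : 1 < q) (hpq : ¬ p ∣ q)
    (hgen : orderOf (q : ZMod (p ^ 2)) = φ (p ^ 2)) :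
    padicValNat p (q ^ (p - 1) - 1) = 1 := by
  have hne : q ^ (p - 1) - 1 ≠ 0 :=
    Nat.sub_ne_zero_of_lt (Nat.one_lt_pow (Nat.sub_ne_zero_of_lt hp.out.one_lt) hq)
  have hdvd : p ∣ q ^ (p - 1) - 1 :=
    (natCast_pow_eq_one_iff_dvd (by omega) _).mp
      (ZMod.pow_card_sub_one_eq_one (by rwa [Ne, ZMod.natCast_eq_zero_iff]))
  have hsq : ¬ p ^ 2 ∣ q ^ (p - 1) - 1 := fun h => by
    rw [Nat.totient_prime_pow_succ hp.out, pow_one] at hgen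
    have h' : p * (p - 1) ∣ 1 * (p - 1) := by
      rw [one_mul, ← hgen]
      exact orderOf_dvd_of_pow_eq_one ((natCast_pow_eq_one_iff_dvd (by omega) _).mpr h)
    exact hp.out.not_dvd_one (Nat.dvd_of_mul_dvd_mul_right (Nat.sub_pos_of_lt hp.out.one_lt) h')
  have := (padicValNat_dvd_iff_le hne).not.mp hsq
  have := one_le_padicValNat_of_dvd hne hdvd
  omega

end

open Matrix

theorem padicValNat_card_GL_eq_of_primitiveRoot_general
    (p q : ℕ) (hp : p.Prime) (hodd : Odd p) (hq : q.Prime) (hne : q ≠ p)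
    (hgen : orderOf (q : ZMod (p ^ 2)) = Nat.totient (p ^ 2))
    (n : ℕ) :
    padicValNat p (Nat.card (GL (Fin n) (ZMod q))) =
      ∑ i ∈ Finset.range (n + 1), n / ((p - 1) * p ^ i) := by
  have := Fact.mk hp
  have := Fact.mk hq
  have hpq : ¬ p ∣ q := fun h => hne ((Nat.prime_dvd_prime_iff_eq hp hq).mp h).symm
  rw [padicValNat_card_GL_eq_sum (ZMod q) (by rwa [ZMod.card]), ZMod.card,
    sum_Icc_padicValNat_pow_sub_one hodd hq.one_lt hpq,
    orderOf_natCast_eq_sub_one_of_orderOf_sq_eq_totient hodd hq.one_lt hpq hgen,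
    padicValNat_pow_sub_one_sub_one_of_orderOf_sq_eq_totient hq.one_lt hpq hgen, mul_one,
    div_add_padicValNat_factorial_div]

/-- Remark 3.4: if `q` is a primitive root modulo `p²` (i.e., the multiplicative
order of `q` in `ZMod (p²)` equals `φ(p²)`), then
`v_p(|GL(n, 𝔽_q)|) = ∑_{i≥0} ⌊n/((p-1)p^i)⌋`. -/
theorem padicValNat_card_GL_eq_of_primitiveRoot
    (p q : ℕ) (hp : p.Prime) (hodd : Odd p) (hq : q.Prime) (hne : q ≠ p)
    (hgen : orderOf (q : ZMod (p ^ 2)) = Nat.totient (p ^ 2))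
    (n : ℕ) (hn : 1 ≤ n) :
    padicValNat p (Nat.card (GL (Fin n) (ZMod q))) =
      ∑ i ∈ Finset.range (n + 1), n / ((p - 1) * p ^ i) :=
  padicValNat_card_GL_eq_of_primitiveRoot_general p q hp hodd hq hne hgen n
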